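/- (Discrete Barbashin theorem) If there exists a constant B ≥ 1 such that Σ_{k=0}^{m} ‖(A_m^k)* x*‖ ≤ B ‖x*‖ for all m ∈ ℕ and x* ∈ X*, then the system is uniformly exponentially stable. -/

import Mathlib

/-!
A summable dual orbit forces each `‖A_m^n‖` to be at most `B` and, since
`x* ∘ A_m^n = (x* ∘ A_m^k) ∘ A_k^n` for every `n ≤ k ≤ m`, also at most `B² / (m - n + 1)`.
Hence a block of fixed length `l ≈ e B²` contracts by `e⁻¹`, and splitting `[n, m]` into such
blocks plus a remainder of norm at most `B` gives `‖A_m^n‖ ≤ B e · exp (-(m - n) / l)`.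
-/

open scoped BigOperators

/-- The evolution operator `A_m^n = A(m) ∘ ⋯ ∘ A(n+1)`, with `A_n^n = 1`. -/
noncomputable def evol {X : Type*} [NormedAddCommGroup X] [NormedSpace ℝ X]
    (A : ℕ → X →L[ℝ] X) (m n : ℕ) : X →L[ℝ] X :=
  ((List.range (m - n)).map (fun k => A (n + k + 1))).foldl (fun P B => B ∘L P) 1

open Real

lemma ContinuousLinearMap.opNorm_le_of_comp_le {𝕜 E F : Type*} [RCLike 𝕜]
    [SeminormedAddCommGroup E] [NormedSpace 𝕜 E] [SeminormedAddCommGroup F] [NormedSpace 𝕜 F]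
    (T : E →L[𝕜] F) {C : ℝ} (hC : 0 ≤ C)
    (h : ∀ f : StrongDual 𝕜 F, ‖f.comp T‖ ≤ C * ‖f‖) : ‖T‖ ≤ C :=
  T.opNorm_le_bound hC fun x =>
    NormedSpace.norm_le_dual_bound 𝕜 (T x) (by positivity) fun f =>
      calc ‖f (T x)‖ ≤ ‖f.comp T‖ * ‖x‖ := (f.comp T).le_opNorm x
        _ ≤ C * ‖f‖ * ‖x‖ := by gcongr; exact h f
        _ = C * ‖x‖ * ‖f‖ := by ring

section Evolution

variable {X : Type*} [NormedAddCommGroup X] [NormedSpace ℝ X] (A : ℕ → X →L[ℝ] X)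

@[simp]
lemma evol_self (n : ℕ) : evol A n n = 1 := by
  simp [evol]

lemma evol_succ {n m : ℕ} (h : n ≤ m) : evol A (m + 1) n = A (m + 1) ∘L evol A m n := by
  unfold evol
  rw [show m + 1 - n = m - n + 1 by omega, List.range_succ, List.map_append, List.foldl_append]
  simp only [List.map_cons, List.map_nil, List.foldl_cons, List.foldl_nil]
  congr 2
  omega

lemma evol_comp {n k m : ℕ} (hnk : n ≤ k) (hkm : k ≤ m) :
    evol A m k ∘L evol A k n = evol A m n := by
  induction m, hkm using Nat.le_induction with
  | base => rw [evol_self]; exact ContinuousLinearMap.id_comp _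
  | succ m hkm ih =>
    rw [evol_succ A (hnk.trans hkm), evol_succ A hkm, ← ih, ContinuousLinearMap.comp_assoc]

lemma norm_evol_comp_le {n k m : ℕ} (hnk : n ≤ k) (hkm : k ≤ m) :
    ‖evol A m n‖ ≤ ‖evol A m k‖ * ‖evol A k n‖ := by
  rw [← evol_comp A hnk hkm]
  exact ContinuousLinearMap.opNorm_comp_le _ _

lemma norm_evol_add_mul_le_exp {l : ℕ} (hl : ∀ n, ‖evol A (n + l) n‖ ≤ exp (-1)) (n q : ℕ) :
    ‖evol A (n + q * l) n‖ ≤ exp (-q) := by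
  induction q with
  | zero =>
    simp only [zero_mul, add_zero, evol_self, CharP.cast_eq_zero, neg_zero, exp_zero]
    exact ContinuousLinearMap.norm_id_le
  | succ q ih =>
    calc ‖evol A (n + (q + 1) * l) n‖
        ≤ ‖evol A (n + q * l + l) (n + q * l)‖ * ‖evol A (n + q * l) n‖ := by
          rw [show n + (q + 1) * l = n + q * l + l by ring]
          exact norm_evol_comp_le A (Nat.le_add_right _ _) (Nat.le_add_right _ _)
      _ ≤ exp (-1) * exp (-q) := by gcongr; exact hl _
      _ = exp (-(q + 1 : ℕ)) := by rw [← exp_add]; push_cast; ring_nf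

lemma norm_evol_le_exp_of_contracting_block {B : ℝ} (hB : 0 ≤ B)
    (hbdd : ∀ n m, n ≤ m → ‖evol A m n‖ ≤ B) {l : ℕ} (hl : 0 < l)
    (hblock : ∀ n, ‖evol A (n + l) n‖ ≤ exp (-1)) {n m : ℕ} (hnm : n ≤ m) :
    ‖evol A m n‖ ≤ B * exp 1 * exp (-(1 / l) * ((m : ℝ) - n)) := by
  have hle := Nat.div_mul_le_self (m - n) l
  have hlt : m - n < (m - n) / l * l + l := Nat.lt_div_mul_add hl
  set q := (m - n) / l
  have hq : n + q * l ≤ m := by omega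
  have hexp : exp (-q) ≤ exp 1 * exp (-(1 / l) * ((m : ℝ) - n)) := by
    rw [← exp_add, exp_le_exp]
    have hlt' : (m : ℝ) - n ≤ (q + 1) * l := by
      rw [← Nat.cast_sub hnm]
      exact_mod_cast (by linarith : m - n ≤ (q + 1) * l)
    have : ((m : ℝ) - n) / l ≤ q + 1 := (div_le_iff₀ (by exact_mod_cast hl)).mpr hlt'
    linarith [show -(1 / (l : ℝ)) * ((m : ℝ) - n) = -(((m : ℝ) - n) / l) by ring]
  calc ‖evol A m n‖ ≤ ‖evol A m (n + q * l)‖ * ‖evol A (n + q * l) n‖ :=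
        norm_evol_comp_le A (Nat.le_add_right _ _) hq
    _ ≤ B * exp (-q) := by
        gcongr
        exacts [hbdd _ _ hq, norm_evol_add_mul_le_exp A hblock n q]
    _ ≤ B * (exp 1 * exp (-(1 / l) * ((m : ℝ) - n))) := by gcongr
    _ = B * exp 1 * exp (-(1 / l) * ((m : ℝ) - n)) := by ring

end Evolution

section Barbashin

variable {X : Type*} [NormedAddCommGroup X] [NormedSpace ℝ X]

def BarbashinCondition (A : ℕ → X →L[ℝ] X) (B : ℝ) : Prop :=
  ∀ m : ℕ, ∀ xs : X →L[ℝ] ℝ, ∑ k ∈ Finset.range (m + 1), ‖xs.comp (evol A m k)‖ ≤ B * ‖xs‖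

namespace BarbashinCondition

variable {A : ℕ → X →L[ℝ] X} {B : ℝ}

lemma norm_comp_evol_le (h : BarbashinCondition A B) {k m : ℕ} (hkm : k ≤ m)
    (xs : X →L[ℝ] ℝ) : ‖xs.comp (evol A m k)‖ ≤ B * ‖xs‖ :=
  (Finset.single_le_sum (f := fun k => ‖xs.comp (evol A m k)‖) (fun _ _ => norm_nonneg _)
    (Finset.mem_range.mpr (Nat.lt_succ_of_le hkm))).trans (h m xs)

lemma norm_evol_le (h : BarbashinCondition A B) (hB : 0 ≤ B) {k m : ℕ} (hkm : k ≤ m) :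
    ‖evol A m k‖ ≤ B :=
  (evol A m k).opNorm_le_of_comp_le hB (h.norm_comp_evol_le hkm)

lemma norm_comp_evol_le_mul (h : BarbashinCondition A B) (hB : 0 ≤ B) {n k m : ℕ}
    (hnk : n ≤ k) (hkm : k ≤ m) (xs : X →L[ℝ] ℝ) :
    ‖xs.comp (evol A m n)‖ ≤ ‖xs.comp (evol A m k)‖ * B := by
  rw [← evol_comp A hnk hkm, ← ContinuousLinearMap.comp_assoc]
  calc _ ≤ ‖xs.comp (evol A m k)‖ * ‖evol A k n‖ := ContinuousLinearMap.opNorm_comp_le _ _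
    _ ≤ ‖xs.comp (evol A m k)‖ * B := by gcongr; exact h.norm_evol_le hB hnk

lemma mul_norm_comp_evol_le (h : BarbashinCondition A B) (hB : 0 ≤ B) {n m : ℕ}
    (hnm : n ≤ m) (xs : X →L[ℝ] ℝ) :
    ((m : ℝ) - n + 1) * ‖xs.comp (evol A m n)‖ ≤ B * B * ‖xs‖ := by
  have hcard : ((Finset.Icc n m).card : ℝ) = (m : ℝ) - n + 1 := by
    rw [Nat.card_Icc, Nat.cast_sub (by omega)]
    push_cast
    ring
  have hsub : Finset.Icc n m ⊆ Finset.range (m + 1) := fun k hk =>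
    Finset.mem_range.mpr (Nat.lt_succ_of_le (Finset.mem_Icc.mp hk).2)
  calc ((m : ℝ) - n + 1) * ‖xs.comp (evol A m n)‖
      = ∑ _k ∈ Finset.Icc n m, ‖xs.comp (evol A m n)‖ := by
        rw [Finset.sum_const, nsmul_eq_mul, hcard]
    _ ≤ ∑ k ∈ Finset.Icc n m, ‖xs.comp (evol A m k)‖ * B :=
        Finset.sum_le_sum fun k hk =>
          h.norm_comp_evol_le_mul hB (Finset.mem_Icc.mp hk).1 (Finset.mem_Icc.mp hk).2 xs
    _ ≤ ∑ k ∈ Finset.range (m + 1), ‖xs.comp (evol A m k)‖ * B :=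
        Finset.sum_le_sum_of_subset_of_nonneg hsub fun _ _ _ => by positivity
    _ ≤ B * ‖xs‖ * B := by rw [← Finset.sum_mul]; gcongr; exact h m xs
    _ = B * B * ‖xs‖ := by ring

lemma norm_evol_le_div (h : BarbashinCondition A B) (hB : 0 ≤ B) {n m : ℕ} (hnm : n ≤ m) :
    ‖evol A m n‖ ≤ B * B / ((m : ℝ) - n + 1) := by
  have hpos : (0 : ℝ) < (m : ℝ) - n + 1 := by
    linarith [show (n : ℝ) ≤ m by exact_mod_cast hnm]
  refine (evol A m n).opNorm_le_of_comp_le (by positivity) fun xs => ?_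
  rw [div_mul_eq_mul_div, le_div_iff₀ hpos, mul_comm]
  exact h.mul_norm_comp_evol_le hB hnm xs

lemma norm_evol_add_le_exp_neg_one (h : BarbashinCondition A B) (hB : 0 ≤ B) {l : ℕ}
    (hl : exp 1 * (B * B) ≤ l) (n : ℕ) : ‖evol A (n + l) n‖ ≤ exp (-1) := by
  refine (h.norm_evol_le_div hB (Nat.le_add_right n l)).trans ?_
  rw [show ((n + l : ℕ) : ℝ) - n + 1 = l + 1 by push_cast; ring, div_le_iff₀ (by positivity),
    exp_neg, inv_mul_eq_div, le_div_iff₀ (exp_pos 1)]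
  linarith

end BarbashinCondition

end Barbashin

theorem stmt5_general {X : Type*} [NormedAddCommGroup X] [NormedSpace ℝ X]
    (A : ℕ → X →L[ℝ] X) (B : ℝ) (hB : 1 ≤ B)
    (h : ∀ m : ℕ, ∀ xs : X →L[ℝ] ℝ,
      ∑ k ∈ Finset.range (m + 1), ‖xs.comp (evol A m k)‖ ≤ B * ‖xs‖) :
    ∃ N α : ℝ, 1 ≤ N ∧ 0 < α ∧
      ∀ n m : ℕ, n ≤ m → ∀ x : X,
        ‖evol A m n x‖ ≤ N * Real.exp (-α * ((m : ℝ) - n)) * ‖x‖ := by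
  replace h : BarbashinCondition A B := h
  have hB0 : 0 ≤ B := zero_le_one.trans hB
  have he : 1 ≤ exp 1 := one_le_exp zero_le_one
  set l := ⌈exp 1 * (B * B)⌉₊
  have hl : exp 1 * (B * B) ≤ l := Nat.le_ceil _
  have hl1 : (1 : ℝ) ≤ l := le_trans (one_le_mul_of_one_le_of_one_le he (by nlinarith)) hl
  refine ⟨B * exp 1, 1 / l, one_le_mul_of_one_le_of_one_le hB he, by positivity,
    fun n m hnm x => (evol A m n).le_of_opNorm_le ?_ x⟩
  exact norm_evol_le_exp_of_contracting_block A hB0 (fun _ _ hnm => h.norm_evol_le hB0 hnm)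
    (by exact_mod_cast hl1) (h.norm_evol_add_le_exp_neg_one hB0 hl) hnm

theorem stmt5 {X : Type*} [NormedAddCommGroup X] [NormedSpace ℝ X] [CompleteSpace X]
    (A : ℕ → X →L[ℝ] X) (B : ℝ) (hB : 1 ≤ B)
    (h : ∀ m : ℕ, ∀ xs : X →L[ℝ] ℝ,
      ∑ k ∈ Finset.range (m + 1), ‖xs.comp (evol A m k)‖ ≤ B * ‖xs‖) :
    ∃ N α : ℝ, 1 ≤ N ∧ 0 < α ∧
      ∀ n m : ℕ, n ≤ m → ∀ x : X,
        ‖evol A m n x‖ ≤ N * Real.exp (-α * ((m : ℝ) - n)) * ‖x‖ :=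
  stmt5_general A B hB h
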